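/- arXiv:1006.2758 — 2 statements merged into one kernel-verified Lean document; each statement's English description precedes it below -/
import Mathlib

section
/- As ρ → 0⁺, the gap between the benchmark rate and the equal-power ZFBF-SUS sum rate satisfies C(ρ) − R_BF(ρ) = (ρ/ln 2) · Σ_{i=1}^{M} (1 + η_i − 1/(1 + κ_i)) λ_i |l_{i,i}|² + O(ρ²); that is, the function ρ ↦ ρ^{-2} · ( C(ρ) − R_BF(ρ) − (ρ/ln 2) Σ_{i=1}^{M} (1 + η_i − 1/(1 + κ_i)) λ_i |l_{i,i}|² ) is bounded as ρ → 0⁺. -/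
open Matrix Filter Finset MeasureTheory

/-- The benchmark rate `C(ρ) = log₂ det(I + ρ C Cᴴ)` with `C = Λ^{1/2} L Q`. -/
noncomputable def benchRate (M m : ℕ) (lam : Fin M → ℝ)
    (L : Matrix (Fin M) (Fin M) ℂ) (Q : Matrix (Fin M) (Fin m) ℂ) (ρ : ℝ) : ℝ :=
  Real.logb 2
    (((1 : Matrix (Fin M) (Fin M) ℂ) +
      (ρ : ℂ) • ((Matrix.diagonal (fun i => (Real.sqrt (lam i) : ℂ)) * L * Q) *
        (Matrix.diagonal (fun i => (Real.sqrt (lam i) : ℂ)) * L * Q)ᴴ)).det).re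

/-- The equal-power ZFDPC-SUS sum rate `R_DPC(ρ) = Σ_i log₂(1 + ρ λ_i |l_{i,i}|²)`. -/
noncomputable def rateDPC (M : ℕ) (lam : Fin M → ℝ)
    (L : Matrix (Fin M) (Fin M) ℂ) (ρ : ℝ) : ℝ :=
  ∑ i, Real.logb 2 (1 + ρ * lam i * Complex.normSq (L i i))

/-- The equal-power ZFBF-SUS sum rate `R_BF(ρ) = Σ_i log₂(1 + ρ λ_i / ‖t_i‖²)`,
where `‖t_i‖² = Σ_j |t_{j,i}|²` is the squared norm of the `i`-th column of `T = L⁻¹`. -/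
noncomputable def rateBF (M : ℕ) (lam : Fin M → ℝ)
    (L : Matrix (Fin M) (Fin M) ℂ) (ρ : ℝ) : ℝ :=
  ∑ i, Real.logb 2 (1 + ρ * lam i / ∑ j, Complex.normSq (L⁻¹ j i))

/-- `κ_i = Σ_{j>i} |t_{j,i}|²/|t_{i,i}|²` where `T = L⁻¹`. -/
noncomputable def kappa (M : ℕ) (L : Matrix (Fin M) (Fin M) ℂ) (i : Fin M) : ℝ :=
  ∑ j ∈ Finset.univ.filter (fun j => i < j),
    Complex.normSq (L⁻¹ j i) / Complex.normSq (L⁻¹ i i)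

/-- `η_i = Σ_{j<i} |l_{i,j}|²/|l_{i,i}|²`. -/
noncomputable def eta (M : ℕ) (L : Matrix (Fin M) (Fin M) ℂ) (i : Fin M) : ℝ :=
  ∑ j ∈ Finset.univ.filter (fun j => j < i),
    Complex.normSq (L i j) / Complex.normSq (L i i)

/-!
Both rates are sums of logarithms of quantities `1 + O(ρ)`: the benchmark is `log det (1 + ρ A)`
with `A = C Cᴴ` and `det (1 + ρ A) = 1 + ρ tr A + O(ρ²)`, and each ZFBF term is `log (1 + ρ gᵢ)`
with gain `gᵢ = λᵢ / ‖tᵢ‖²`. Since `log (1 + x) = x + O(x²)`, the gap is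
`(ρ / ln 2) (tr A - Σ gᵢ) + O(ρ²)`. Finally `Q Qᴴ = 1` gives
`tr A = Σ λᵢ Σⱼ |lᵢⱼ|² = Σ λᵢ |lᵢᵢ|² (1 + ηᵢ)`, and triangularity gives `tᵢᵢ = 1 / lᵢᵢ`, hence
`gᵢ = λᵢ |lᵢᵢ|² / (1 + κᵢ)`.
-/

open Asymptotics Topology

theorem Real.log_one_add_sub_self_isBigO :
    (fun x : ℝ => Real.log (1 + x) - x) =O[𝓝 0] fun x => x ^ 2 := by
  have hc := Complex.log_sub_self_isBigO.comp_tendsto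
    (Complex.continuous_ofReal.tendsto' 0 0 Complex.ofReal_zero)
  have heq : (fun x : ℝ => ((Real.log (1 + x) - x : ℝ) : ℂ)) =ᶠ[𝓝 0]
      (fun z => Complex.log (1 + z) - z) ∘ Complex.ofReal := by
    filter_upwards [eventually_gt_nhds (show (-1 : ℝ) < 0 by norm_num)] with x hx
    simp [Complex.ofReal_log (by linarith : (0:ℝ) ≤ 1 + x)]
  rw [← Complex.isBigO_ofReal_left, ← Complex.isBigO_ofReal_right]
  simpa [Function.comp_def] using hc.congr' heq.symm (Eventually.of_forall fun _ => rfl)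

theorem Real.log_one_add_sub_isBigO_sq {f : ℝ → ℝ} {a : ℝ}
    (hf : (fun ρ => f ρ - a * ρ) =O[𝓝 0] fun ρ => ρ ^ 2) :
    (fun ρ => Real.log (1 + f ρ) - a * ρ) =O[𝓝 0] fun ρ => ρ ^ 2 := by
  have hf_lin : f =O[𝓝 0] fun ρ => ρ := by
    have := (hf.trans (isLittleO_pow_id one_lt_two).isBigO).add
      ((isBigO_refl (fun ρ : ℝ => ρ) _).const_mul_left a)
    simpa using this
  have hf_tendsto : Tendsto f (𝓝 0) (𝓝 0) := hf_lin.trans_tendsto tendsto_id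
  have hlog := (Real.log_one_add_sub_self_isBigO.comp_tendsto hf_tendsto).trans (hf_lin.pow 2)
  simpa using hlog.add hf

theorem Matrix.re_det_one_add_smul_sub_isBigO {n : Type*} [Fintype n] [DecidableEq n]
    (A : Matrix n n ℂ) :
    (fun ρ : ℝ => (det (1 + (ρ : ℂ) • A)).re - 1 - A.trace.re * ρ) =O[𝓝 0]
      fun ρ => ρ ^ 2 := by
  set P := (det (1 + (Polynomial.X : Polynomial ℂ) • A.map Polynomial.C)).divX.divX
  have hP : (fun ρ : ℝ => (P.eval (ρ : ℂ)).re) =O[𝓝 0] fun _ => (1 : ℝ) :=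
    ((Complex.continuous_re.comp (P.continuous.comp Complex.continuous_ofReal)).tendsto
      0).isBigO_one ℝ
  refine ((hP.mul (isBigO_refl (fun ρ : ℝ => ρ ^ 2) _)).congr (fun ρ => ?_) fun ρ => one_mul _)
  rw [det_one_add_smul]
  simp only [← Complex.ofReal_pow, Complex.add_re, Complex.mul_re,
    Complex.ofReal_re, Complex.ofReal_im, Complex.one_re]
  ring

theorem Matrix.log_re_det_one_add_smul_sub_isBigO {n : Type*} [Fintype n] [DecidableEq n]
    (A : Matrix n n ℂ) :
    (fun ρ : ℝ => Real.log (det (1 + (ρ : ℂ) • A)).re - A.trace.re * ρ) =O[𝓝 0]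
      fun ρ => ρ ^ 2 := by
  simpa only [add_sub_cancel] using Real.log_one_add_sub_isBigO_sq
    (f := fun ρ : ℝ => (det (1 + (ρ : ℂ) • A)).re - 1) A.re_det_one_add_smul_sub_isBigO

theorem exists_bound_inv_sq_mul_of_isBigO_sq {g : ℝ → ℝ} (hg : g =O[𝓝 0] fun ρ => ρ ^ 2) :
    ∃ B : ℝ, ∀ᶠ ρ in 𝓝[>] 0, |(ρ ^ 2)⁻¹ * g ρ| ≤ B := by
  obtain ⟨c, hc⟩ := hg.bound
  refine ⟨c, ?_⟩
  filter_upwards [nhdsWithin_le_nhds hc, self_mem_nhdsWithin] with ρ hρ hρ_pos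
  have hρ2 : 0 < ρ ^ 2 := pow_pos hρ_pos 2
  rw [Real.norm_eq_abs, Real.norm_eq_abs, abs_of_pos hρ2] at hρ
  rw [abs_mul, abs_inv, abs_of_pos hρ2, inv_mul_le_iff₀ hρ2, mul_comm]
  exact hρ

theorem Matrix.IsLowerTriangular.inv {n R : Type*} [Fintype n] [DecidableEq n] [LinearOrder n]
    [CommRing R] {A : Matrix n n R} (hA : A.IsLowerTriangular) : A⁻¹.IsLowerTriangular := by
  by_cases hdet : IsUnit A.det
  · have := A.invertibleOfIsUnitDet hdet
    exact blockTriangular_inv_of_blockTriangular hA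
  · rw [nonsing_inv_apply_not_isUnit A hdet]
    exact blockTriangular_zero

theorem Matrix.IsLowerTriangular.mul_apply_self {n R : Type*} [Fintype n] [LinearOrder n]
    [CommRing R] {A B : Matrix n n R} (hA : A.IsLowerTriangular) (hB : B.IsLowerTriangular)
    (i : n) : (A * B) i i = A i i * B i i := by
  rw [mul_apply, Finset.sum_eq_single i]
  · intro k _ hki
    rcases hki.lt_or_gt with hki | hki
    · rw [hB (show OrderDual.toDual i < OrderDual.toDual k from hki), mul_zero]
    · rw [hA (show OrderDual.toDual k < OrderDual.toDual i from hki), zero_mul]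
  · simp

theorem Matrix.IsLowerTriangular.mul_inv_apply_self {n R : Type*} [Fintype n] [DecidableEq n]
    [LinearOrder n] [CommRing R] {A : Matrix n n R} (hA : A.IsLowerTriangular)
    (hdet : IsUnit A.det) (i : n) : A i i * A⁻¹ i i = 1 := by
  rw [← hA.mul_apply_self hA.inv, mul_nonsing_inv A hdet, one_apply_eq]

theorem Matrix.IsLowerTriangular.isUnit_det {n K : Type*} [Fintype n] [DecidableEq n]
    [LinearOrder n] [Field K] {A : Matrix n n K} (hA : A.IsLowerTriangular)
    (hdiag : ∀ i, A i i ≠ 0) : IsUnit A.det := by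
  rw [det_of_isLowerTriangular A hA, isUnit_iff_ne_zero]
  exact Finset.prod_ne_zero_iff.mpr fun i _ => hdiag i

theorem Complex.sum_normSq_eq_normSq_mul_one_add {ι : Type*} [Fintype ι] [DecidableEq ι]
    {v : ι → ℂ} {i : ι} {s : Finset ι} (hi : i ∉ s) (hv : ∀ j, j ∉ s → j ≠ i → v j = 0)
    (hvi : v i ≠ 0) :
    ∑ j, normSq (v j) = normSq (v i) * (1 + ∑ j ∈ s, normSq (v j) / normSq (v i)) := by
  have hvi' : normSq (v i) ≠ 0 := normSq_pos.mpr hvi |>.ne'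
  rw [mul_add, mul_one, Finset.mul_sum]
  simp_rw [mul_div_cancel₀ _ hvi']
  rw [← Finset.sum_insert (f := fun j => normSq (v j)) hi]
  refine (Finset.sum_subset (Finset.subset_univ _) fun j _ hj => ?_).symm
  rw [Finset.mem_insert, not_or] at hj
  rw [hv j hj.2 hj.1, map_zero]

theorem Matrix.trace_mul_conjTranspose_self_eq {m n : Type*} [Fintype m] [Fintype n]
    (X : Matrix m n ℂ) : (X * Xᴴ).trace = ∑ i, ∑ j, (Complex.normSq (X i j) : ℂ) := by
  simp only [trace, diag, mul_apply, conjTranspose_apply, Complex.star_def, Complex.mul_conj]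

theorem re_trace_mul_conjTranspose_channel {n k : Type*} [Fintype n] [Fintype k] [DecidableEq n]
    {lam : n → ℝ} (hlam : ∀ i, 0 ≤ lam i) (L : Matrix n n ℂ) {Q : Matrix n k ℂ}
    (hQ : Q * Qᴴ = 1) :
    ((diagonal (fun i => (Real.sqrt (lam i) : ℂ)) * L * Q) *
      (diagonal (fun i => (Real.sqrt (lam i) : ℂ)) * L * Q)ᴴ).trace.re =
      ∑ i, lam i * ∑ j, Complex.normSq (L i j) := by
  set X := diagonal (fun i => (Real.sqrt (lam i) : ℂ)) * L
  have hXQ : (X * Q) * (X * Q)ᴴ = X * Xᴴ := by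
    rw [conjTranspose_mul, Matrix.mul_assoc, ← Matrix.mul_assoc Q, hQ, Matrix.one_mul]
  rw [hXQ, trace_mul_conjTranspose_self_eq]
  simp [X, diagonal_mul, Complex.normSq_mul, Real.mul_self_sqrt (hlam _), Finset.mul_sum]

section ZeroForcing

variable {M : ℕ} {L : Matrix (Fin M) (Fin M) ℂ}

theorem sum_normSq_row_eq_mul_one_add_eta (hL : L.IsLowerTriangular) {i : Fin M}
    (hi : L i i ≠ 0) : ∑ j, Complex.normSq (L i j) = Complex.normSq (L i i) * (1 + eta M L i) :=
  Complex.sum_normSq_eq_normSq_mul_one_add (by simp) (fun j hj hji => hL (show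
    OrderDual.toDual j < OrderDual.toDual i by simp_all [lt_of_le_of_ne])) hi

theorem sum_normSq_inv_col_eq_mul_one_add_kappa (hL : L.IsLowerTriangular) {i : Fin M}
    (hi : L⁻¹ i i ≠ 0) :
    ∑ j, Complex.normSq (L⁻¹ j i) = Complex.normSq (L⁻¹ i i) * (1 + kappa M L i) :=
  Complex.sum_normSq_eq_normSq_mul_one_add (v := fun j => L⁻¹ j i) (by simp)
    (fun j hj hji => hL.inv (show OrderDual.toDual i < OrderDual.toDual j by
      simp_all [lt_of_le_of_ne])) hi

theorem div_sum_normSq_inv_col_eq (hL : L.IsLowerTriangular) (hdiag : ∀ i, L i i ≠ 0)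
    (a : ℝ) (i : Fin M) :
    a / ∑ j, Complex.normSq (L⁻¹ j i) = a * Complex.normSq (L i i) / (1 + kappa M L i) := by
  have hdiag_inv := hL.mul_inv_apply_self (hL.isUnit_det hdiag) i
  have hinv : Complex.normSq (L⁻¹ i i) * Complex.normSq (L i i) = 1 := by
    rw [← map_mul, mul_comm, hdiag_inv, map_one]
  rw [sum_normSq_inv_col_eq_mul_one_add_kappa hL (right_ne_zero_of_mul_eq_one hdiag_inv),
    ← div_div, div_eq_mul_inv a, inv_eq_of_mul_eq_one_right hinv]

theorem sum_linear_gap_coeff_eq (hL : L.IsLowerTriangular) (hdiag : ∀ i, L i i ≠ 0)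
    (lam : Fin M → ℝ) :
    ∑ i, (1 + eta M L i - 1 / (1 + kappa M L i)) * (lam i * Complex.normSq (L i i)) =
      ∑ i, lam i * ∑ j, Complex.normSq (L i j) - ∑ i, lam i / ∑ j, Complex.normSq (L⁻¹ j i) := by
  rw [← Finset.sum_sub_distrib]
  refine Finset.sum_congr rfl fun i _ => ?_
  rw [sum_normSq_row_eq_mul_one_add_eta hL (hdiag i), div_sum_normSq_inv_col_eq hL hdiag]
  ring

end ZeroForcing

theorem lowSNR_gap_ZFBF_general
    (M m : ℕ)
    (lam : Fin M → ℝ) (hlam : ∀ i, 0 < lam i)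
    (L : Matrix (Fin M) (Fin M) ℂ)
    (hLtri : ∀ i j : Fin M, i < j → L i j = 0)
    (hLdiag : ∀ i : Fin M, L i i ≠ 0)
    (Q : Matrix (Fin M) (Fin m) ℂ) (hQ : Q * Qᴴ = 1) :
    ∃ B : ℝ, ∀ᶠ ρ : ℝ in nhdsWithin (0 : ℝ) (Set.Ioi 0),
      |(ρ ^ 2)⁻¹ * (benchRate M m lam L Q ρ - rateBF M lam L ρ -
        (ρ / Real.log 2) *
          ∑ i, (1 + eta M L i - 1 / (1 + kappa M L i)) *
            (lam i * Complex.normSq (L i i)))| ≤ B := by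
  have hL : L.IsLowerTriangular := fun i j h => hLtri i j h
  set A := (diagonal (fun i => (Real.sqrt (lam i) : ℂ)) * L * Q) *
      (diagonal (fun i => (Real.sqrt (lam i) : ℂ)) * L * Q)ᴴ
  set S : Fin M → ℝ := fun i => ∑ j, Complex.normSq (L⁻¹ j i)
  have hbench := A.log_re_det_one_add_smul_sub_isBigO
  have hBF (i : Fin M) : (fun ρ : ℝ => Real.log (1 + ρ * lam i / S i) - lam i / S i * ρ) =O[𝓝 0]
      fun ρ => ρ ^ 2 :=
    Real.log_one_add_sub_isBigO_sq ((isBigO_zero _ _).congr_left fun ρ => by ring)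
  have hgap := (hbench.sub (IsBigO.fun_sum (s := Finset.univ) fun i _ => hBF i)).const_mul_left
    (Real.log 2)⁻¹
  refine exists_bound_inv_sq_mul_of_isBigO_sq (hgap.congr_left fun ρ => ?_)
  rw [sum_linear_gap_coeff_eq hL hLdiag,
    ← re_trace_mul_conjTranspose_channel (fun i => (hlam i).le) L hQ]
  simp only [benchRate, rateBF, Real.logb, A, S, Finset.sum_sub_distrib, ← Finset.sum_mul,
    ← Finset.sum_div]
  ring

/-- Low-SNR gap for ZFBF-SUS:
`C(ρ) − R_BF(ρ) = (ρ/ln 2) Σ_i (1 + η_i − 1/(1+κ_i)) λ_i |l_{i,i}|² + O(ρ²)` as `ρ → 0⁺`. -/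
theorem lowSNR_gap_ZFBF
    (M m : ℕ) (hM : 1 ≤ M) (hm : M ≤ m)
    (lam : Fin M → ℝ) (hlam : ∀ i, 0 < lam i)
    (L : Matrix (Fin M) (Fin M) ℂ)
    (hLtri : ∀ i j : Fin M, i < j → L i j = 0)
    (hLdiag : ∀ i : Fin M, L i i ≠ 0)
    (Q : Matrix (Fin M) (Fin m) ℂ) (hQ : Q * Qᴴ = 1) :
    ∃ B : ℝ, ∀ᶠ ρ : ℝ in nhdsWithin (0 : ℝ) (Set.Ioi 0),
      |(ρ ^ 2)⁻¹ * (benchRate M m lam L Q ρ - rateBF M lam L ρ -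
        (ρ / Real.log 2) *
          ∑ i, (1 + eta M L i - 1 / (1 + kappa M L i)) *
            (lam i * Complex.normSq (L i i)))| ≤ B :=
  lowSNR_gap_ZFBF_general M m lam hlam L hLtri hLdiag Q hQ
end

section
/- As ρ → ∞, the difference between the equal-power ZFDPC-SUS and ZFBF-SUS sum rates satisfies R_DPC(ρ) − R_BF(ρ) = Σ_{i=1}^{M} log₂(1 + κ_i) + O(ρ^{-1}); that is, the function ρ ↦ ρ · ( R_DPC(ρ) − R_BF(ρ) − Σ_{i=1}^{M} log₂(1 + κ_i) ) is bounded as ρ → ∞. -/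
/-! Writing `x = ρ λ_i |l_{i,i}|²`, the `i`-th ZFBF rate is `log(1 + x / (1 + κ_i))`, because the
`i`-th column of the lower triangular `L⁻¹` has squared norm `|t_{i,i}|² (1 + κ_i)` and
`t_{i,i} = 1 / l_{i,i}`. The `i`-th term of the difference is then
`log (1 + x) - log (1 + x / (1 + κ_i)) - log (1 + κ_i) = -log (1 + κ_i / (1 + x))`,
which lies between `-κ_i / (1 + x)` and `0`, and `ρ κ_i / (1 + x) ≤ κ_i / (λ_i |l_{i,i}|²)`. -/

open Matrix Filter Finset MeasureTheory

namespace Matrix.BlockTriangular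

variable {n K : Type*} [Fintype n] [LinearOrder n] [DecidableEq n] [Field K] {A : Matrix n n K}

theorem isUnit_det_of_lower (hA : A.BlockTriangular OrderDual.toDual) (hdiag : ∀ i, A i i ≠ 0) :
    IsUnit A.det := by
  rw [det_of_isLowerTriangular A hA]
  exact isUnit_iff_ne_zero.2 (prod_ne_zero_iff.2 fun i _ => hdiag i)

theorem inv_apply_self_mul_apply_self (hA : A.BlockTriangular OrderDual.toDual)
    (hdiag : ∀ i, A i i ≠ 0) (i : n) : A⁻¹ i i * A i i = 1 := by
  have hdet := isUnit_det_of_lower hA hdiag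
  have := A.invertibleOfIsUnitDet hdet
  have hinv := blockTriangular_inv_of_blockTriangular hA
  have h := congrFun (congrFun (nonsing_inv_mul A hdet) i) i
  rw [mul_apply, sum_eq_single i] at h
  · simpa using h
  · intro k _ hk
    rcases hk.lt_or_gt with hki | hik
    · rw [hA hki, mul_zero]
    · rw [hinv hik, zero_mul]
  · simp

end Matrix.BlockTriangular

section

variable {M : ℕ} {L : Matrix (Fin M) (Fin M) ℂ}

theorem kappa_nonneg (i : Fin M) : 0 ≤ kappa M L i :=
  sum_nonneg fun _ _ => div_nonneg (Complex.normSq_nonneg _) (Complex.normSq_nonneg _)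

theorem sum_normSq_inv_apply_eq (hL : L.BlockTriangular OrderDual.toDual)
    (hdiag : ∀ i, L i i ≠ 0) (i : Fin M) :
    ∑ j, Complex.normSq (L⁻¹ j i) = (1 + kappa M L i) / Complex.normSq (L i i) := by
  have hinv : (L⁻¹).BlockTriangular OrderDual.toDual := by
    have := L.invertibleOfIsUnitDet (hL.isUnit_det_of_lower hdiag)
    exact blockTriangular_inv_of_blockTriangular hL
  have hii : Complex.normSq (L⁻¹ i i) * Complex.normSq (L i i) = 1 := by
    rw [← Complex.normSq_mul, hL.inv_apply_self_mul_apply_self hdiag i, Complex.normSq_one]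
  have hTii : Complex.normSq (L⁻¹ i i) ≠ 0 := left_ne_zero_of_mul_eq_one hii
  have hLii : Complex.normSq (L i i) ≠ 0 := right_ne_zero_of_mul_eq_one hii
  have hle : ∑ j ∈ univ.filter (fun j => ¬ i < j), Complex.normSq (L⁻¹ j i)
      = Complex.normSq (L⁻¹ i i) := by
    refine sum_eq_single_of_mem i (by simp) fun j hj hji => ?_
    rw [hinv (show j < i from (not_lt.1 (mem_filter.1 hj).2).lt_of_ne hji), map_zero]
  rw [← sum_filter_add_sum_filter_not univ (fun j => i < j), hle, kappa, ← sum_div]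
  field_simp
  linear_combination (∑ j ∈ univ.filter (fun j => i < j), Complex.normSq (L⁻¹ j i)
    + Complex.normSq (L⁻¹ i i)) * hii

theorem rateBF_eq (hL : L.BlockTriangular OrderDual.toDual) (hdiag : ∀ i, L i i ≠ 0)
    (lam : Fin M → ℝ) (ρ : ℝ) :
    rateBF M lam L ρ =
      ∑ i, Real.logb 2 (1 + ρ * (lam i * Complex.normSq (L i i)) / (1 + kappa M L i)) := by
  refine sum_congr rfl fun i _ => ?_
  rw [sum_normSq_inv_apply_eq hL hdiag, div_div_eq_mul_div, mul_assoc]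

end

theorem abs_mul_logb_one_add_sub_le {b a k ρ : ℝ} (hb : 1 < b) (ha : 0 < a) (hk : 0 ≤ k)
    (hρ : 0 ≤ ρ) :
    |ρ * (Real.logb b (1 + ρ * a) - Real.logb b (1 + ρ * a / (1 + k)) - Real.logb b (1 + k))|
      ≤ k / (a * Real.log b) := by
  set x := ρ * a
  have hx : 0 ≤ x := by positivity
  have hlogb : 0 < Real.log b := Real.log_pos hb
  have hgap : Real.logb b (1 + x) - Real.logb b (1 + x / (1 + k)) - Real.logb b (1 + k)
      = -Real.logb b (1 + k / (1 + x)) := by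
    rw [← Real.logb_div (by positivity) (by positivity), ← Real.logb_div (by positivity)
      (by positivity), ← Real.logb_inv]
    congr 1
    field_simp
    ring
  have hlog : Real.log (1 + k / (1 + x)) ≤ k / (1 + x) := by
    linarith [Real.log_le_sub_one_of_pos (show 0 < 1 + k / (1 + x) by positivity)]
  rw [hgap, abs_mul, abs_neg, abs_of_nonneg hρ,
    abs_of_nonneg (Real.logb_nonneg hb (le_add_of_nonneg_right (by positivity)))]
  calc ρ * Real.logb b (1 + k / (1 + x)) ≤ ρ * (k / (1 + x) / Real.log b) := by
        unfold Real.logb; gcongr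
    _ ≤ k / (a * Real.log b) := by
        rw [div_div, mul_div_assoc', div_le_div_iff₀ (by positivity) (by positivity)]
        nlinarith [mul_nonneg hk hlogb.le]

theorem highSNR_diff_ZFDPC_ZFBF_general
    (M : ℕ)
    (lam : Fin M → ℝ) (hlam : ∀ i, 0 < lam i)
    (L : Matrix (Fin M) (Fin M) ℂ)
    (hLtri : ∀ i j : Fin M, i < j → L i j = 0)
    (hLdiag : ∀ i : Fin M, L i i ≠ 0) :
    ∃ B : ℝ, ∀ᶠ ρ : ℝ in atTop,
      |ρ * (rateDPC M lam L ρ - rateBF M lam L ρ -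
        ∑ i, Real.logb 2 (1 + kappa M L i))| ≤ B := by
  have hL : L.BlockTriangular OrderDual.toDual := fun i j h => hLtri i j h
  refine ⟨∑ i, kappa M L i / (lam i * Complex.normSq (L i i) * Real.log 2), ?_⟩
  filter_upwards [eventually_ge_atTop 0] with ρ hρ
  rw [rateBF_eq hL hLdiag, rateDPC, ← sum_sub_distrib, ← sum_sub_distrib, mul_sum]
  refine (abs_sum_le_sum_abs _ _).trans (sum_le_sum fun i _ => ?_)
  rw [mul_assoc ρ]
  exact abs_mul_logb_one_add_sub_le one_lt_two
    (mul_pos (hlam i) (Complex.normSq_pos.2 (hLdiag i))) (kappa_nonneg i) hρ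

/-- High-SNR difference between ZFDPC-SUS and ZFBF-SUS:
`R_DPC(ρ) − R_BF(ρ) = Σ_i log₂(1 + κ_i) + O(ρ⁻¹)` as `ρ → ∞`. -/
theorem highSNR_diff_ZFDPC_ZFBF
    (M m : ℕ) (hM : 1 ≤ M) (hm : M ≤ m)
    (lam : Fin M → ℝ) (hlam : ∀ i, 0 < lam i)
    (L : Matrix (Fin M) (Fin M) ℂ)
    (hLtri : ∀ i j : Fin M, i < j → L i j = 0)
    (hLdiag : ∀ i : Fin M, L i i ≠ 0)
    (Q : Matrix (Fin M) (Fin m) ℂ) (hQ : Q * Qᴴ = 1) :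
    ∃ B : ℝ, ∀ᶠ ρ : ℝ in atTop,
      |ρ * (rateDPC M lam L ρ - rateBF M lam L ρ -
        ∑ i, Real.logb 2 (1 + kappa M L i))| ≤ B :=
  highSNR_diff_ZFDPC_ZFBF_general M lam hlam L hLtri hLdiag
end
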